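/- Let P, Q, R be natural numbers and p ∈ M_Q ⊗ M_R a projection with R ≤ rank(p), R | rank(p), rank(p)/R < Q, and P | (Q − rank(p)/R). Then there exists a unitary u ∈ M_P ⊗ M_Q ⊗ M_R such that for every C*-algebra A, every a ∈ A, and every b ∈ A ⊗ M_P, the element Ad(1 ⊗ u)((a ⊗ 1_{M_P} ⊗ p) + (b ⊗ (1 − p))) lies in A ⊗ 1_{M_P} ⊗ M_Q ⊗ 1_{M_R}. -/

import Mathlib

open scoped TensorProduct Kronecker

/-- A projection in a `*`-ring: a self-adjoint idempotent. -/
def IsProjectionElem {A : Type*} [Mul A] [Star A] (p : A) : Prop :=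
  star p = p ∧ p * p = p

/-- Kronecker multiplication on the right by a fixed matrix, as a linear map. -/
noncomputable def kronRightₗ {k l : Type*} [Fintype k] [Fintype l]
    (B : Matrix l l ℂ) : Matrix k k ℂ →ₗ[ℂ] Matrix (k × l) (k × l) ℂ where
  toFun M := M ⊗ₖ B
  map_add' M N := Matrix.add_kronecker M N B
  map_smul' c M := Matrix.smul_kronecker c M B

/-- Kronecker multiplication on the left by a fixed matrix, as a linear map. -/
noncomputable def kronLeftₗ {k l : Type*} [Fintype k] [Fintype l]
    (B : Matrix k k ℂ) : Matrix l l ℂ →ₗ[ℂ] Matrix (k × l) (k × l) ℂ where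
  toFun M := B ⊗ₖ M
  map_add' M N := Matrix.kronecker_add B M N
  map_smul' c M := Matrix.kronecker_smul c B M

/-- Conjugation `x ↦ u x u*` by a fixed matrix, as a linear map. -/
noncomputable def conjₗ {k : Type*} [Fintype k] (u : Matrix k k ℂ) :
    Matrix k k ℂ →ₗ[ℂ] Matrix k k ℂ where
  toFun M := u * M * star u
  map_add' M N := by noncomm_ring
  map_smul' c M := by
    simp [Matrix.mul_smul, Matrix.smul_mul]

open scoped TensorProduct Kronecker

namespace Stmt11

open Matrix


variable {n : Type*} [Fintype n] [DecidableEq n]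

/-- permutation matrix of `e` -/
noncomputable def permMat (e : Equiv.Perm n) : Matrix n n ℂ :=
  Matrix.of fun x y => if x = e y then 1 else 0

lemma star_permMat (e : Equiv.Perm n) :
    star (permMat e) = Matrix.of fun x y => if e x = y then (1:ℂ) else 0 := by
  ext x y
  simp only [star_apply, permMat, Matrix.of_apply]
  split_ifs with h h' h'
  · simp
  · exact absurd h.symm h'
  · exact absurd h'.symm h
  · simp

lemma permMat_mul (e : Equiv.Perm n) (Z : Matrix n n ℂ) :
    permMat e * Z = Z.submatrix e.symm id := by
  ext x y
  simp only [mul_apply, permMat, Matrix.of_apply, submatrix_apply, id_eq]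
  rw [Finset.sum_eq_single (e.symm x)]
  · simp
  · intro b _ hb
    rw [if_neg, zero_mul]
    intro hxe
    exact hb (by simp [hxe])
  · simp

lemma mul_star_permMat (e : Equiv.Perm n) (Z : Matrix n n ℂ) :
    Z * star (permMat e) = Z.submatrix id e.symm := by
  ext x y
  rw [star_permMat]
  simp only [mul_apply, Matrix.of_apply, submatrix_apply, id_eq]
  rw [Finset.sum_eq_single (e.symm y)]
  · simp
  · intro b _ hb
    rw [if_neg, mul_zero]
    intro hxe
    exact hb (by simp [← hxe])
  · simp

lemma permMat_conj (e : Equiv.Perm n) (Z : Matrix n n ℂ) :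
    permMat e * Z * star (permMat e) = Z.submatrix e.symm e.symm := by
  rw [permMat_mul, mul_star_permMat]
  rfl

lemma permMat_mem (e : Equiv.Perm n) : permMat e ∈ Matrix.unitaryGroup n ℂ := by
  rw [Matrix.mem_unitaryGroup_iff]
  have := permMat_conj e 1
  rwa [mul_one, Matrix.submatrix_one_equiv] at this

/-- a projection is unitarily equivalent to any 0-1 diagonal with matching rank -/
lemma exists_unitary_conj_proj_eq_diagonal
    (p : Matrix n n ℂ) (hps : star p = p) (hpp : p * p = p)
    (T : n → Prop) [DecidablePred T] (hT : Fintype.card {x // T x} = p.rank) :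
    ∃ w ∈ Matrix.unitaryGroup n ℂ,
      w * p * star w = Matrix.diagonal (fun x => if T x then (1:ℂ) else 0) := by
  classical
  have hherm : p.IsHermitian := by rwa [Matrix.IsHermitian, ← Matrix.star_eq_conjTranspose]
  set U : Matrix n n ℂ := (hherm.eigenvectorUnitary : Matrix n n ℂ) with hU
  have hUmem : U ∈ Matrix.unitaryGroup n ℂ := hherm.eigenvectorUnitary.2
  set D : Matrix n n ℂ := Matrix.diagonal (RCLike.ofReal ∘ hherm.eigenvalues) with hD
  have hdiag : star U * p * U = D := (Unitary.conjStarAlgAut_star_apply _ _).symm.trans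
    hherm.conjStarAlgAut_star_eigenvectorUnitary
  have hDD : D * D = D := by
    rw [← hdiag]
    have h1 : U * star U = 1 := Matrix.mem_unitaryGroup_iff.mp hUmem
    calc star U * p * U * (star U * p * U)
        = star U * (p * (U * star U) * p) * U := by noncomm_ring
      _ = star U * p * U := by rw [h1, mul_one, hpp]
  have hev : ∀ i, hherm.eigenvalues i = 0 ∨ hherm.eigenvalues i = 1 := by
    intro i
    have := congrFun (congrFun hDD i) i
    simp only [hD, Matrix.diagonal_mul_diagonal, Matrix.diagonal_apply_eq,
      Function.comp_apply] at this
    have h2 : hherm.eigenvalues i * hherm.eigenvalues i = hherm.eigenvalues i := by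
      exact_mod_cast this
    rcases eq_or_ne (hherm.eigenvalues i) 0 with h | h
    · exact Or.inl h
    · exact Or.inr (mul_left_cancel₀ h (by rw [h2, mul_one]))
  -- build permutation matching ones with T
  set S : n → Prop := fun x => hherm.eigenvalues x ≠ 0 with hS
  have hcard : Fintype.card {x // S x} = Fintype.card {x // T x} := by
    rw [hT, hherm.rank_eq_card_non_zero_eigs]
  have hcardc : Fintype.card {x // ¬ S x} = Fintype.card {x // ¬ T x} := by
    have h1 := Fintype.card_subtype_compl S
    have h2 := Fintype.card_subtype_compl T
    rw [h1, h2, hcard]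
  let e₁ : {x // S x} ≃ {x // T x} := Fintype.equivOfCardEq hcard
  let e₂ : {x // ¬ S x} ≃ {x // ¬ T x} := Fintype.equivOfCardEq hcardc
  let σ : Equiv.Perm n :=
    (Equiv.sumCompl S).symm.trans ((e₁.sumCongr e₂).trans (Equiv.sumCompl T))
  have hσ : ∀ x, T (σ x) ↔ S x := by
    intro x
    by_cases hx : S x
    · have : (Equiv.sumCompl S).symm x = Sum.inl ⟨x, hx⟩ := by
        rw [Equiv.symm_apply_eq]; rfl
      simp only [σ, Equiv.trans_apply, this, Equiv.sumCongr_apply, Sum.map_inl,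
        Equiv.sumCompl_apply_inl]
      exact iff_of_true (e₁ ⟨x, hx⟩).2 hx
    · have : (Equiv.sumCompl S).symm x = Sum.inr ⟨x, hx⟩ := by
        rw [Equiv.symm_apply_eq]; rfl
      simp only [σ, Equiv.trans_apply, this, Equiv.sumCongr_apply, Sum.map_inr,
        Equiv.sumCompl_apply_inr]
      exact iff_of_false (e₂ ⟨x, hx⟩).2 hx
  refine ⟨permMat σ * star U, mul_mem (permMat_mem σ) (Unitary.star_mem hUmem), ?_⟩
  have : permMat σ * star U * p * star (permMat σ * star U)
      = permMat σ * (star U * p * U) * star (permMat σ) := by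
    have hst : star (permMat σ * star U) = U * star (permMat σ) := by
      rw [StarMul.star_mul, star_star]
    rw [hst]
    noncomm_ring
  rw [this, hdiag, permMat_conj]
  ext x y
  simp only [submatrix_apply, hD]
  rcases eq_or_ne x y with rfl | hxy
  · simp only [Matrix.diagonal_apply_eq, Function.comp_apply]
    by_cases hx : T x
    · have hSx : S (σ.symm x) :=
        (hσ (σ.symm x)).mp (by rw [Equiv.apply_symm_apply]; exact hx)
      rcases hev (σ.symm x) with h | h
      · exact absurd h hSx
      · simp [h, hx]
    · have hSx : ¬ S (σ.symm x) := fun hs => hx (by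
        have := (hσ (σ.symm x)).mpr hs
        rwa [Equiv.apply_symm_apply] at this)
      have h0 : hherm.eigenvalues (σ.symm x) = 0 := not_not.mp hSx
      simp [h0, hx]
  · rw [Matrix.diagonal_apply_ne _ (fun h => hxy (σ.symm.injective h)),
      Matrix.diagonal_apply_ne _ hxy]



lemma mulP_add_mod {a i P : ℕ} (hi : i < P) : (a * P + i) % P = i := by
  rw [Nat.add_comm, Nat.add_mul_mod_self_right, Nat.mod_eq_of_lt hi]

lemma divmod_eq {a a' i i' P : ℕ} (hi : i < P) (hi' : i' < P)
    (h : a * P + i = a' * P + i') : a = a' ∧ i = i' := by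
  have h2 : (a * P + i) % P = (a' * P + i') % P := congrArg (· % P) h
  rw [mulP_add_mod hi, mulP_add_mod hi'] at h2
  subst h2
  have hP : 0 < P := lt_of_le_of_lt (Nat.zero_le _) hi
  exact ⟨Nat.eq_of_mul_eq_mul_right hP (by omega), rfl⟩

/-- first coordinate of the shuffle, at `ℕ` level -/
def g1 (k P i j : ℕ) : ℕ := if j < k then i else (j - k) % P

/-- second coordinate of the shuffle, at `ℕ` level -/
def g2 (k P i j : ℕ) : ℕ := if j < k then j else k + ((j - k) / P) * P + i

lemma g1_lt {k P i j : ℕ} (hP : 0 < P) (hi : i < P) : g1 k P i j < P := by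
  rw [g1]; split
  · exact hi
  · exact Nat.mod_lt _ hP

lemma g2_lt {k P Q i j : ℕ} (hd : P ∣ Q - k) (hi : i < P) (hj : j < Q) :
    g2 k P i j < Q := by
  rw [g2]; split
  · exact hj
  · rename_i h
    have hk : k ≤ j := le_of_not_gt h
    have h2 : (j - k) / P < (Q - k) / P := Nat.div_lt_div_of_lt_of_dvd hd (by omega)
    have h3 : ((j - k) / P + 1) * P ≤ ((Q - k) / P) * P := Nat.mul_le_mul_right P h2
    rw [Nat.div_mul_cancel hd, add_mul, one_mul] at h3
    generalize (j - k) / P * P = t at h3 ⊢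
    omega

lemma g2_not_lt {k P i j : ℕ} (h : ¬ j < k) : ¬ g2 k P i j < k := by
  rw [g2, if_neg h]
  exact Nat.not_lt.mpr (le_trans (Nat.le_add_right _ _) (Nat.le_add_right _ _))

lemma g_invol {k P i j : ℕ} (hi : i < P) (hj : k ≤ j ∨ j < k) :
    g1 k P (g1 k P i j) (g2 k P i j) = i ∧ g2 k P (g1 k P i j) (g2 k P i j) = j := by
  by_cases h : j < k
  · simp [g1, g2, h]
  · have hk : k ≤ j := le_of_not_gt h
    have hnl := g2_not_lt (k := k) (P := P) (i := i) h
    constructor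
    · rw [g1, if_neg hnl, g2, if_neg h]
      have e1 : k + (j - k) / P * P + i - k = (j - k) / P * P + i := by
        rw [Nat.add_assoc, Nat.add_sub_cancel_left]
      rw [e1, mulP_add_mod hi]
    · conv_lhs => rw [g2]
      rw [if_neg hnl]
      rw [g2, if_neg h, g1, if_neg h]
      have e1 : k + (j - k) / P * P + i - k = (j - k) / P * P + i := by
        rw [Nat.add_assoc, Nat.add_sub_cancel_left]
      rw [e1]
      have e2 : ((j - k) / P * P + i) / P = (j - k) / P := by
        rw [Nat.add_comm, Nat.add_mul_div_right _ _ (lt_of_le_of_lt (Nat.zero_le _) hi),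
          Nat.div_eq_of_lt hi, Nat.zero_add]
      rw [e2]
      have e3 : (j - k) / P * P + (j - k) % P = j - k := Nat.div_add_mod' _ _
      omega

/-- On `j ≥ k`: extract quotient/remainder relation used to identify entries. -/
lemma g_main_eq_iff {k P i i' j j' : ℕ} (hi : i < P) (hi' : i' < P)
    (hj : ¬ j < k) (hj' : ¬ j' < k) :
    g2 k P i j = g2 k P i' j' ↔ ((j - k) / P = (j' - k) / P ∧ i = i') := by
  rw [g2, g2, if_neg hj, if_neg hj']
  constructor
  · intro h
    have h' : (j - k) / P * P + i = (j' - k) / P * P + i' := by omega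
    exact divmod_eq hi hi' h'
  · rintro ⟨h1, rfl⟩
    rw [h1]


lemma kron_star {m n : Type*} (A : Matrix m m ℂ) (B : Matrix n n ℂ) :
    star (A ⊗ₖ B) = star A ⊗ₖ star B := by
  ext x y
  simp [Matrix.star_apply, Matrix.kroneckerMap_apply, star_mul', mul_comm]



section main

variable (P Q R k : ℕ)

/-- the shuffle on the full index type -/
def Ffun (hP : 0 < P) (hd : P ∣ Q - k) (x : Fin P × Fin Q × Fin R) :
    Fin P × Fin Q × Fin R :=
  (⟨g1 k P (x.1 : ℕ) (x.2.1 : ℕ), g1_lt hP x.1.isLt⟩,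
   ⟨g2 k P (x.1 : ℕ) (x.2.1 : ℕ), g2_lt hd x.1.isLt x.2.1.isLt⟩, x.2.2)

lemma Ffun_invol (hP : 0 < P) (hd : P ∣ Q - k) :
    Function.Involutive (Ffun P Q R k hP hd) := by
  intro x
  have h := g_invol (k := k) (P := P) (i := (x.1 : ℕ)) (j := (x.2.1 : ℕ))
    x.1.isLt (le_or_gt k _)
  exact Prod.ext (Fin.ext h.1) (Prod.ext (Fin.ext h.2) rfl)

/-- the rank-`k` diagonal projection in `M_Q` -/
noncomputable def eK : Matrix (Fin Q) (Fin Q) ℂ :=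
  Matrix.diagonal fun j => if (j : ℕ) < k then 1 else 0

/-- the model projection in `M_Q ⊗ M_R` -/
noncomputable def qdiag : Matrix (Fin Q × Fin R) (Fin Q × Fin R) ℂ :=
  Matrix.diagonal fun y => if (y.1 : ℕ) < k then 1 else 0

lemma one_sub_qdiag :
    (1 : Matrix (Fin Q × Fin R) (Fin Q × Fin R) ℂ) - qdiag Q R k
      = Matrix.diagonal fun y => if (y.1 : ℕ) < k then 0 else 1 := by
  rw [qdiag, ← Matrix.diagonal_one, Matrix.diagonal_sub]
  refine congrArg Matrix.diagonal (funext fun y => ?_)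
  by_cases h : (y.1 : ℕ) < k <;> simp [h]

/-- the embedding `M_P → M_Q` build from the shuffle -/
noncomputable def phi (hP : 0 < P) :
    Matrix (Fin P) (Fin P) ℂ →ₗ[ℂ] Matrix (Fin Q) (Fin Q) ℂ where
  toFun c := Matrix.of fun j j' =>
    if k ≤ (j : ℕ) ∧ k ≤ (j' : ℕ) ∧ ((j : ℕ) - k) / P = ((j' : ℕ) - k) / P
    then c ⟨((j : ℕ) - k) % P, Nat.mod_lt _ hP⟩ ⟨((j' : ℕ) - k) % P, Nat.mod_lt _ hP⟩
    else 0
  map_add' c d := by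
    ext j j'
    simp only [Matrix.of_apply, Matrix.add_apply]
    split <;> simp
  map_smul' a c := by
    ext j j'
    simp only [Matrix.of_apply, Matrix.smul_apply, RingHom.id_apply]
    split <;> simp

lemma lemA (hP : 0 < P) (hd : P ∣ Q - k) :
    ((1 : Matrix (Fin P) (Fin P) ℂ) ⊗ₖ qdiag Q R k).submatrix
        (Ffun P Q R k hP hd) (Ffun P Q R k hP hd)
      = (1 : Matrix (Fin P) (Fin P) ℂ) ⊗ₖ
          (eK Q k ⊗ₖ (1 : Matrix (Fin R) (Fin R) ℂ)) := by
  ext ⟨i, j, r⟩ ⟨i', j', r'⟩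
  simp only [Matrix.submatrix_apply, Ffun, Matrix.kroneckerMap_apply, qdiag, eK,
    Matrix.one_apply, Matrix.diagonal_apply, Prod.mk.injEq, Fin.mk.injEq, Fin.ext_iff]
  by_cases hj : (j : ℕ) < k <;> by_cases hj' : (j' : ℕ) < k
  · simp only [g1, g2, if_pos hj, if_pos hj']
    by_cases hii : (i : ℕ) = (i' : ℕ) <;> by_cases hjj : (j : ℕ) = (j' : ℕ) <;>
      by_cases hrr : r = r' <;> simp_all
  · simp only [g1, g2, if_pos hj, if_neg hj']
    have hne : ¬ ((j : ℕ) = k + ((j' : ℕ) - k) / P * P + (i' : ℕ)) := by omega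
    have hjj : ¬ ((j : ℕ) = (j' : ℕ)) := by omega
    simp_all
  · simp only [g1, g2, if_neg hj, if_pos hj']
    have hne : ¬ (k + ((j : ℕ) - k) / P * P + (i : ℕ) = (j' : ℕ)) := by omega
    have hjj : ¬ ((j : ℕ) = (j' : ℕ)) := by omega
    simp_all
  · have h2 := g2_not_lt (k := k) (P := P) (i := (i : ℕ)) hj
    simp only [g2] at h2
    rw [if_neg hj] at h2
    simp only [g1, g2, if_neg hj, if_neg hj']
    simp_all
    omega
lemma lemB (hP : 0 < P) (hd : P ∣ Q - k) (c : Matrix (Fin P) (Fin P) ℂ) :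
    (c ⊗ₖ ((1 : Matrix (Fin Q × Fin R) (Fin Q × Fin R) ℂ) - qdiag Q R k)).submatrix
        (Ffun P Q R k hP hd) (Ffun P Q R k hP hd)
      = (1 : Matrix (Fin P) (Fin P) ℂ) ⊗ₖ
          ((phi P Q k hP c) ⊗ₖ (1 : Matrix (Fin R) (Fin R) ℂ)) := by
  ext ⟨i, j, r⟩ ⟨i', j', r'⟩
  rw [one_sub_qdiag]
  simp only [Matrix.submatrix_apply, Ffun, Matrix.kroneckerMap_apply, phi, Matrix.one_apply,
    Matrix.diagonal_apply, Prod.mk.injEq, Fin.mk.injEq, Fin.ext_iff, LinearMap.coe_mk,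
    AddHom.coe_mk, Matrix.of_apply]
  by_cases hj : (j : ℕ) < k <;> by_cases hj' : (j' : ℕ) < k
  · have hcond : ¬ (k ≤ (j : ℕ) ∧ k ≤ (j' : ℕ)
        ∧ ((j : ℕ) - k) / P = ((j' : ℕ) - k) / P) := by omega
    simp only [g1, g2, if_pos hj, if_pos hj']
    simp_all
  · have hcond : ¬ (k ≤ (j : ℕ) ∧ k ≤ (j' : ℕ)
        ∧ ((j : ℕ) - k) / P = ((j' : ℕ) - k) / P) := by omega
    simp only [g1, g2, if_pos hj, if_neg hj']
    have hne : ¬ ((j : ℕ) = k + ((j' : ℕ) - k) / P * P + (i' : ℕ)) := by omega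
    simp_all
  · have hcond : ¬ (k ≤ (j : ℕ) ∧ k ≤ (j' : ℕ)
        ∧ ((j : ℕ) - k) / P = ((j' : ℕ) - k) / P) := by omega
    simp only [g1, g2, if_neg hj, if_pos hj']
    have hne : ¬ (k + ((j : ℕ) - k) / P * P + (i : ℕ) = (j' : ℕ)) := by omega
    simp_all
  · simp only [g1, g2, if_neg hj, if_neg hj']
    have hlt : ¬ (k + ((j : ℕ) - k) / P * P + (i : ℕ) < k) := by omega
    have hiff : (k + ((j : ℕ) - k) / P * P + (i : ℕ)
          = k + ((j' : ℕ) - k) / P * P + (i' : ℕ))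
        ↔ (((j : ℕ) - k) / P = ((j' : ℕ) - k) / P ∧ (i : ℕ) = (i' : ℕ)) := by
      constructor
      · intro h
        exact divmod_eq i.isLt i'.isLt (by omega)
      · rintro ⟨hA, hB⟩
        rw [hA, hB]
    simp only [hiff, hlt, if_false, ite_false]
    have h1 : k ≤ (j : ℕ) := by omega
    have h1' : k ≤ (j' : ℕ) := by omega
    simp only [h1, h1', true_and]
    by_cases hA : ((j : ℕ) - k) / P = ((j' : ℕ) - k) / P <;>
      by_cases hB : (i : ℕ) = (i' : ℕ) <;> by_cases hC : r = r' <;> simp_all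

end main

end Stmt11

/-- given `P, Q, R` and a projection `p ∈ M_Q ⊗ M_R` with `R ≤ rank p`,
`R ∣ rank p`, `rank p / R < Q`, and `P ∣ (Q − rank p / R)`, there is a unitary
`u ∈ M_P ⊗ M_Q ⊗ M_R` such that for every C*-algebra `A`, every `a ∈ A` and every
`b ∈ A ⊗ M_P`, the element `Ad(1 ⊗ u)((a ⊗ 1_{M_P} ⊗ p) + (b ⊗ (1 − p)))` lies in
`A ⊗ 1_{M_P} ⊗ M_Q ⊗ 1_{M_R}`. -/
theorem exists_unitary_conjugating_into_middle_factor
    (P Q R : ℕ) (hP : 0 < P) (hQ : 0 < Q) (hR : 0 < R)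
    (p : Matrix (Fin Q × Fin R) (Fin Q × Fin R) ℂ)
    (hp : IsProjectionElem p)
    (h1 : R ≤ p.rank) (h2 : R ∣ p.rank) (h3 : p.rank / R < Q) (h4 : P ∣ (Q - p.rank / R)) :
    ∃ u ∈ Matrix.unitaryGroup (Fin P × Fin Q × Fin R) ℂ,
      ∀ (A : Type*) [NonUnitalCStarAlgebra A] (a : A)
        (b : A ⊗[ℂ] Matrix (Fin P) (Fin P) ℂ),
        (LinearMap.lTensor A (conjₗ u))
            (a ⊗ₜ[ℂ] ((1 : Matrix (Fin P) (Fin P) ℂ) ⊗ₖ p)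
              + (LinearMap.lTensor A (kronRightₗ (1 - p))) b)
          ∈ Set.range (LinearMap.lTensor A
              (kronLeftₗ (1 : Matrix (Fin P) (Fin P) ℂ) ∘ₗ
                kronRightₗ (1 : Matrix (Fin R) (Fin R) ℂ))) := by
  classical
  set k : ℕ := p.rank / R with hk
  have hkQ : k < Q := h3
  have hd : P ∣ Q - k := h4
  -- diagonalize the projection
  have hcard : Fintype.card {y : Fin Q × Fin R // (y.1 : ℕ) < k} = p.rank := by
    have e : {y : Fin Q × Fin R // (y.1 : ℕ) < k} ≃ Fin k × Fin R :=
      { toFun := fun y => (⟨(y.1.1 : ℕ), y.2⟩, y.1.2)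
        invFun := fun z => ⟨(⟨(z.1 : ℕ), lt_trans z.1.isLt hkQ⟩, z.2), z.1.isLt⟩
        left_inv := fun y => rfl
        right_inv := fun z => rfl }
    rw [Fintype.card_congr e, Fintype.card_prod, Fintype.card_fin, Fintype.card_fin]
    exact Nat.div_mul_cancel h2
  obtain ⟨w, hw, hwp⟩ := Stmt11.exists_unitary_conj_proj_eq_diagonal p hp.1 hp.2
    (fun y => (y.1 : ℕ) < k) hcard
  have hwq : w * p * star w = Stmt11.qdiag Q R k := hwp
  -- the permutation part
  set F : Fin P × Fin Q × Fin R → Fin P × Fin Q × Fin R := Stmt11.Ffun P Q R k hP hd with hF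
  have hFinv : Function.Involutive F := Stmt11.Ffun_invol P Q R k hP hd
  set ePerm : Equiv.Perm (Fin P × Fin Q × Fin R) := hFinv.toPerm F with hePerm
  have hsymm : ⇑(Equiv.symm ePerm) = F := by
    rw [hePerm, Function.Involutive.toPerm_symm]
    rfl
  -- the unitary
  have h1w : ((1 : Matrix (Fin P) (Fin P) ℂ) ⊗ₖ w)
      ∈ Matrix.unitaryGroup (Fin P × Fin Q × Fin R) ℂ := by
    rw [Matrix.mem_unitaryGroup_iff, Stmt11.kron_star, ← Matrix.mul_kronecker_mul, star_one,
      mul_one, Matrix.mem_unitaryGroup_iff.mp hw, Matrix.one_kronecker_one]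
  set u : Matrix (Fin P × Fin Q × Fin R) (Fin P × Fin Q × Fin R) ℂ :=
    Stmt11.permMat ePerm * ((1 : Matrix (Fin P) (Fin P) ℂ) ⊗ₖ w) with hu
  have humem : u ∈ Matrix.unitaryGroup (Fin P × Fin Q × Fin R) ℂ :=
    mul_mem (Stmt11.permMat_mem ePerm) h1w
  -- conjugation formula
  have conj1 : ∀ (c : Matrix (Fin P) (Fin P) ℂ)
      (X : Matrix (Fin Q × Fin R) (Fin Q × Fin R) ℂ),
      u * (c ⊗ₖ X) * star u = (c ⊗ₖ (w * X * star w)).submatrix F F := by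
    intro c X
    have hstar : star u = star ((1 : Matrix (Fin P) (Fin P) ℂ) ⊗ₖ w)
        * star (Stmt11.permMat ePerm) := by
      rw [hu, StarMul.star_mul]
    calc u * (c ⊗ₖ X) * star u
        = Stmt11.permMat ePerm
            * (((1 : Matrix (Fin P) (Fin P) ℂ) ⊗ₖ w) * (c ⊗ₖ X)
              * star ((1 : Matrix (Fin P) (Fin P) ℂ) ⊗ₖ w))
            * star (Stmt11.permMat ePerm) := by
          rw [hstar, hu]
          noncomm_ring
      _ = Stmt11.permMat ePerm * (c ⊗ₖ (w * X * star w)) * star (Stmt11.permMat ePerm) := by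
          rw [Stmt11.kron_star, ← Matrix.mul_kronecker_mul, ← Matrix.mul_kronecker_mul, star_one,
            one_mul, mul_one]
      _ = (c ⊗ₖ (w * X * star w)).submatrix F F := by
          rw [Stmt11.permMat_conj, hsymm]
  -- the two key identities
  have hI : u * ((1 : Matrix (Fin P) (Fin P) ℂ) ⊗ₖ p) * star u
      = (1 : Matrix (Fin P) (Fin P) ℂ) ⊗ₖ
          (Stmt11.eK Q k ⊗ₖ (1 : Matrix (Fin R) (Fin R) ℂ)) := by
    rw [conj1, hwq, hF]
    exact Stmt11.lemA P Q R k hP hd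
  have hII : ∀ c : Matrix (Fin P) (Fin P) ℂ,
      u * (c ⊗ₖ ((1 : Matrix (Fin Q × Fin R) (Fin Q × Fin R) ℂ) - p)) * star u
        = (1 : Matrix (Fin P) (Fin P) ℂ) ⊗ₖ
            ((Stmt11.phi P Q k hP c) ⊗ₖ (1 : Matrix (Fin R) (Fin R) ℂ)) := by
    intro c
    have hws : w * ((1 : Matrix (Fin Q × Fin R) (Fin Q × Fin R) ℂ) - p) * star w
        = (1 : Matrix (Fin Q × Fin R) (Fin Q × Fin R) ℂ) - Stmt11.qdiag Q R k := by
      rw [Matrix.mul_sub, Matrix.sub_mul, mul_one, Matrix.mem_unitaryGroup_iff.mp hw, hwq]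
    rw [conj1, hws, hF]
    exact Stmt11.lemB P Q R k hP hd c
  refine ⟨u, humem, ?_⟩
  intro A _ a b
  have t1 : (LinearMap.lTensor A (conjₗ u))
      (a ⊗ₜ[ℂ] ((1 : Matrix (Fin P) (Fin P) ℂ) ⊗ₖ p))
      = a ⊗ₜ[ℂ] ((kronLeftₗ (1 : Matrix (Fin P) (Fin P) ℂ) ∘ₗ
          kronRightₗ (1 : Matrix (Fin R) (Fin R) ℂ)) (Stmt11.eK Q k)) := by
    have hI' : (conjₗ u) ((1 : Matrix (Fin P) (Fin P) ℂ) ⊗ₖ p)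
        = (kronLeftₗ (1 : Matrix (Fin P) (Fin P) ℂ) ∘ₗ
            kronRightₗ (1 : Matrix (Fin R) (Fin R) ℂ)) (Stmt11.eK Q k) := hI
    rw [LinearMap.lTensor_tmul, hI']
  have t2 : (conjₗ u) ∘ₗ kronRightₗ (1 - p)
      = (kronLeftₗ (1 : Matrix (Fin P) (Fin P) ℂ) ∘ₗ
          kronRightₗ (1 : Matrix (Fin R) (Fin R) ℂ)) ∘ₗ Stmt11.phi P Q k hP := by
    apply LinearMap.ext
    intro c
    exact hII c
  refine ⟨a ⊗ₜ[ℂ] Stmt11.eK Q k + (LinearMap.lTensor A (Stmt11.phi P Q k hP)) b, ?_⟩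
  rw [map_add, map_add, t1, LinearMap.lTensor_tmul]
  congr 1
  rw [← LinearMap.comp_apply, ← LinearMap.lTensor_comp, ← t2, LinearMap.lTensor_comp,
    LinearMap.comp_apply]
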